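/- Consider a K-armed stochastic bandit in which, for each arm j ∈ {1, …, K}, the rewards (X_{j,s})_{s≥1} are i.i.d. random variables taking values in [0,1] with mean μ_j, and the reward sequences of distinct arms are mutually independent. Let μ* = max_j μ_j and Δ_j = μ* − μ_j. Run the UCB1 policy: first play each arm once; then at each subsequent round t, play an arm maximizing the index x̄_j(t) + sqrt(2 ln t / N_j(t)), where N_j(t) is the number of times arm j has been played before round t and x̄_j(t) is the empirical mean of the rewards obtained from arm j so far. Then for every arm j with Δ_j > 0 and every n ≥ K, the expected number of plays of arm j after n rounds satisfies E[N_j(n)] ≤ 8 ln n / Δ_j² + (1 + π²/3). -/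

import Mathlib

open MeasureTheory ProbabilityTheory Filter

section UCBHelpers

open Real

private lemma iIndepFun_precomp {Ω ι κ : Type*} [MeasurableSpace Ω] {P : Measure Ω}
    {f : ι → Ω → ℝ} (h : iIndepFun f P)
    (g : κ → ι) (hg : Function.Injective g) :
    iIndepFun (fun k => f (g k)) P := by
  classical
  rw [iIndepFun_iff_measure_inter_preimage_eq_mul] at h ⊢
  intro S sets hsets
  have key := h (S.image g) (sets := Function.extend g sets (fun _ => Set.univ)) ?_
  · have e1 : (⋂ i ∈ S.image g, f i ⁻¹' Function.extend g sets (fun _ => Set.univ) i)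
        = ⋂ k ∈ S, f (g k) ⁻¹' sets k := by
      rw [Finset.set_biInter_finset_image]
      refine Set.iInter₂_congr fun k _ => ?_
      rw [hg.extend_apply]
    have e2 : ∏ i ∈ S.image g, P (f i ⁻¹' Function.extend g sets (fun _ => Set.univ) i)
        = ∏ k ∈ S, P (f (g k) ⁻¹' sets k) := by
      rw [Finset.prod_image (fun a _ b _ hab => hg hab)]
      refine Finset.prod_congr rfl fun k _ => ?_
      rw [hg.extend_apply]
    rw [e1, e2] at key
    exact key
  · intro i hi
    rcases Finset.mem_image.1 hi with ⟨k, hk, rfl⟩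
    rw [hg.extend_apply]
    exact hsets k hk


private lemma hoeffding_core {p l : ℝ} (hp0 : 0 ≤ p) (hp1 : p ≤ 1) :
    1 - p + p * exp l ≤ exp (p * l + l ^ 2 / 8) := by
  have hD : ∀ x : ℝ, 0 < 1 - p + p * exp x := by
    intro x
    rcases eq_or_lt_of_le hp0 with h | h
    · simp [← h]
    · nlinarith [exp_pos x, (exp_pos x).le]
  set f : ℝ → ℝ := fun x => p * x + x ^ 2 / 8 - Real.log (1 - p + p * exp x) with hf
  set g : ℝ → ℝ := fun x => p + x / 4 - p * exp x / (1 - p + p * exp x) with hg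
  have hDf : ∀ x, HasDerivAt f (g x) x := by
    intro x
    have h1 : HasDerivAt (fun x : ℝ => 1 - p + p * exp x) (p * exp x) x :=
      ((Real.hasDerivAt_exp x).const_mul p).const_add (1 - p)
    have h2 : HasDerivAt (fun x => Real.log (1 - p + p * exp x))
        (p * exp x / (1 - p + p * exp x)) x := by
      have := (Real.hasDerivAt_log (hD x).ne').comp x h1
      exact this.congr_deriv (by rw [div_eq_inv_mul])
    have h3 : HasDerivAt (fun x : ℝ => p * x + x ^ 2 / 8) (p + x / 4) x := by
      have := ((hasDerivAt_pow 2 x).div_const 8).const_add 0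
      have h4 : HasDerivAt (fun x : ℝ => p * x) p x := by
        simpa using (hasDerivAt_id x).const_mul p
      have h5 : HasDerivAt (fun x : ℝ => x ^ 2 / 8) (x / 4) x := by
        have := (hasDerivAt_pow 2 x).div_const 8
        exact this.congr_deriv (by rw [show (2:ℕ) - 1 = 1 from rfl, pow_one]; ring)
      exact h4.add h5
    exact h3.sub h2
  have hDg : ∀ x, HasDerivAt g
      (1 / 4 - (p * exp x * (1 - p + p * exp x) - p * exp x * (p * exp x)) /
        (1 - p + p * exp x) ^ 2) x := by
    intro x
    have h1 : HasDerivAt (fun x : ℝ => 1 - p + p * exp x) (p * exp x) x :=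
      ((Real.hasDerivAt_exp x).const_mul p).const_add (1 - p)
    have h2 : HasDerivAt (fun x : ℝ => p * exp x) (p * exp x) x :=
      (Real.hasDerivAt_exp x).const_mul p
    have h3 := h2.div h1 (hD x).ne'
    have h4 : HasDerivAt (fun x : ℝ => p + x / 4) (1 / 4) x := by
      simpa using ((hasDerivAt_id x).div_const 4).const_add p
    exact h4.sub h3
  have hgmono : Monotone g := by
    apply monotone_of_deriv_nonneg (fun x => (hDg x).differentiableAt)
    intro x
    rw [(hDg x).deriv]
    have key : (p * exp x * (1 - p + p * exp x) - p * exp x * (p * exp x)) /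
        (1 - p + p * exp x) ^ 2 ≤ 1 / 4 := by
      rw [div_le_iff₀ (pow_pos (hD x) 2)]
      nlinarith [sq_nonneg ((1 - p + p * exp x) - 2 * (p * exp x))]
    linarith
  have hg0 : g 0 = 0 := by simp [hg]
  have hf0 : f 0 = 0 := by simp [hf]
  have hfnonneg : ∀ x, 0 ≤ f x := by
    intro x
    rcases le_total 0 x with hx | hx
    · have : MonotoneOn f (Set.Ici 0) := by
        apply monotoneOn_of_deriv_nonneg (convex_Ici 0)
          (fun y _ => (hDf y).differentiableAt.continuousAt.continuousWithinAt)
          (fun y _ => (hDf y).differentiableAt.differentiableWithinAt)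
        intro y hy
        rw [(hDf y).deriv]
        rw [interior_Ici] at hy
        have := hgmono (le_of_lt hy)
        rw [hg0] at this; exact this
      have := this (Set.self_mem_Ici) (Set.mem_Ici.2 hx) hx
      rwa [hf0] at this
    · have : AntitoneOn f (Set.Iic 0) := by
        apply antitoneOn_of_deriv_nonpos (convex_Iic 0)
          (fun y _ => (hDf y).differentiableAt.continuousAt.continuousWithinAt)
          (fun y _ => (hDf y).differentiableAt.differentiableWithinAt)
        intro y hy
        rw [(hDf y).deriv]
        rw [interior_Iic] at hy
        have := hgmono (le_of_lt hy)
        rw [hg0] at this; exact this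
      have := this (Set.mem_Iic.2 hx) (Set.self_mem_Iic) hx
      rwa [hf0] at this
  have := hfnonneg l
  simp only [hf, sub_nonneg] at this
  calc 1 - p + p * exp l = exp (Real.log (1 - p + p * exp l)) := (exp_log (hD l)).symm
    _ ≤ exp (p * l + l ^ 2 / 8) := exp_le_exp.2 this


set_option maxHeartbeats 800000 in
private lemma hoeffding_tail {Ω : Type*} [MeasurableSpace Ω] (P : Measure Ω) [IsProbabilityMeasure P]
    (W : ℕ → Ω → ℝ) (hmeas : ∀ u, Measurable (W u))
    (hrange : ∀ u ω, W u ω ∈ Set.Icc (0:ℝ) 1)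
    (hindep : iIndepFun W P)
    (m : ℝ) (hm : ∀ u, ∫ ω, W u ω ∂P = m)
    (s : ℕ) (ε : ℝ) (hε : 0 ≤ ε) :
    (P {ω | s * (m + ε) ≤ ∑ u ∈ Finset.range s, W u ω}).toReal ≤
      Real.exp (-2 * s * ε ^ 2) := by
  have hm01 : 0 ≤ m ∧ m ≤ 1 := by
    rw [← hm 0]
    constructor
    · exact integral_nonneg fun ω => (hrange 0 ω).1
    · calc ∫ ω, W 0 ω ∂P ≤ ∫ _, (1:ℝ) ∂P := by
            apply integral_mono _ (integrable_const 1) (fun ω => (hrange 0 ω).2)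
            exact (integrable_const 1).mono' (hmeas 0).aestronglyMeasurable
              (ae_of_all _ fun ω => by
                rw [Real.norm_eq_abs, abs_of_nonneg (hrange 0 ω).1]; exact (hrange 0 ω).2)
      _ = 1 := by simp
  set l : ℝ := 4 * ε with hl
  have hl0 : 0 ≤ l := by positivity
  set Y : ℕ → Ω → ℝ := fun u ω => W u ω - m with hY
  have hYmeas : ∀ u, Measurable (Y u) := fun u => (hmeas u).sub measurable_const
  have hYindep : iIndepFun Y P := by
    exact hindep.comp (fun _ x => x - m) (fun _ => measurable_id.sub measurable_const)
  have hYbd : ∀ u ω, |Y u ω| ≤ 1 := by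
    intro u ω
    have h1 := (hrange u ω).1; have h2 := (hrange u ω).2
    rw [abs_le]
    simp only [hY]
    constructor <;> nlinarith [hm01.1, hm01.2]
  -- integrability of exp (l * Y u)
  have hint : ∀ u, Integrable (fun ω => Real.exp (l * Y u ω)) P := by
    intro u
    refine (integrable_const (Real.exp l)).mono'
      (((hYmeas u).const_mul l).exp).aestronglyMeasurable (ae_of_all _ fun ω => ?_)
    rw [Real.norm_eq_abs, abs_of_pos (Real.exp_pos _), Real.exp_le_exp]
    nlinarith [hYbd u ω, abs_le.1 (hYbd u ω)]
  -- mgf bound for each Y u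
  have hmgf : ∀ u, mgf (Y u) P l ≤ Real.exp (l ^ 2 / 8) := by
    intro u
    have hWint : Integrable (W u) P :=
      (integrable_const 1).mono' (hmeas u).aestronglyMeasurable
        (ae_of_all _ fun ω => by
          rw [Real.norm_eq_abs, abs_of_nonneg (hrange u ω).1]; exact (hrange u ω).2)
    have hexpW : Integrable (fun ω => Real.exp (l * W u ω)) P := by
      refine (integrable_const (Real.exp l)).mono'
        (((hmeas u).const_mul l).exp).aestronglyMeasurable (ae_of_all _ fun ω => ?_)
      rw [Real.norm_eq_abs, abs_of_pos (Real.exp_pos _), Real.exp_le_exp]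
      nlinarith [(hrange u ω).1, (hrange u ω).2]
    have step1 : mgf (Y u) P l = Real.exp (- (l * m)) * ∫ ω, Real.exp (l * W u ω) ∂P := by
      have hfun : (fun ω => Real.exp (l * Y u ω))
          = fun ω => Real.exp (-(l * m)) * Real.exp (l * W u ω) := by
        funext ω
        rw [← Real.exp_add]
        congr 1
        simp only [hY]
        ring
      rw [mgf, hfun, integral_const_mul]
    have step2 : ∫ ω, Real.exp (l * W u ω) ∂P ≤ 1 - m + m * Real.exp l := by
      have hptw : ∀ ω, Real.exp (l * W u ω) ≤ 1 - W u ω + W u ω * Real.exp l := by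
        intro ω
        have := convexOn_exp.2 (Set.mem_univ (0:ℝ)) (Set.mem_univ l)
          (by linarith [(hrange u ω).2] : (0:ℝ) ≤ 1 - W u ω) (hrange u ω).1 (by ring)
        simpa [mul_comm] using this
      calc ∫ ω, Real.exp (l * W u ω) ∂P ≤ ∫ ω, (1 - W u ω + W u ω * Real.exp l) ∂P := by
            apply integral_mono hexpW _ hptw
            exact ((integrable_const 1).sub hWint).add (hWint.mul_const _)
        _ = 1 - m + m * Real.exp l := by
            have i1 : Integrable (fun ω => 1 - W u ω) P := (integrable_const 1).sub hWint
            rw [integral_add i1 (hWint.mul_const _),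
              integral_sub (integrable_const 1) hWint, integral_mul_const, hm u]
            simp
    calc mgf (Y u) P l ≤ Real.exp (-(l * m)) * (1 - m + m * Real.exp l) := by
          rw [step1]
          exact mul_le_mul_of_nonneg_left step2 (Real.exp_pos _).le
      _ ≤ Real.exp (-(l * m)) * Real.exp (m * l + l ^ 2 / 8) :=
          mul_le_mul_of_nonneg_left (hoeffding_core hm01.1 hm01.2) (Real.exp_pos _).le
      _ = Real.exp (l ^ 2 / 8) := by rw [← Real.exp_add]; ring_nf
  -- Chernoff
  have hset : {ω | (s:ℝ) * (m + ε) ≤ ∑ u ∈ Finset.range s, W u ω}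
      = {ω | (s:ℝ) * ε ≤ ∑ u ∈ Finset.range s, Y u ω} := by
    ext ω
    simp only [Set.mem_setOf_eq, hY, Finset.sum_sub_distrib,
      Finset.sum_const, Finset.card_range, nsmul_eq_mul]
    constructor <;> intro h <;> nlinarith
  have hintsum : Integrable (fun ω => Real.exp (l * ∑ u ∈ Finset.range s, Y u ω)) P := by
    refine (integrable_const (Real.exp (l * s))).mono'
      ((Finset.measurable_sum _ fun u _ => hYmeas u).const_mul l).exp.aestronglyMeasurable
      (ae_of_all _ fun ω => ?_)
    rw [Real.norm_eq_abs, abs_of_pos (Real.exp_pos _), Real.exp_le_exp]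
    have hsle : ∑ u ∈ Finset.range s, Y u ω ≤ s := by
      calc ∑ u ∈ Finset.range s, Y u ω ≤ ∑ u ∈ Finset.range s, (1:ℝ) :=
            Finset.sum_le_sum fun u _ => (abs_le.1 (hYbd u ω)).2
        _ = s := by simp
    nlinarith
  have hsum_eq : (∑ u ∈ Finset.range s, Y u) = (fun ω => ∑ u ∈ Finset.range s, Y u ω) := by
    funext ω
    simp [Finset.sum_apply]
  have mgfsum := hYindep.mgf_sum (t := l) hYmeas (Finset.range s)
  rw [hsum_eq] at mgfsum
  have chern := measure_ge_le_exp_mul_mgf (μ := P)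
    (X := fun ω => ∑ u ∈ Finset.range s, Y u ω) ((s:ℝ) * ε) hl0 hintsum
  rw [mgfsum] at chern
  rw [hset]
  refine chern.trans ?_
  calc Real.exp (-l * ((s:ℝ) * ε)) * ∏ u ∈ Finset.range s, mgf (Y u) P l
      ≤ Real.exp (-l * ((s:ℝ) * ε)) * ∏ u ∈ Finset.range s, Real.exp (l ^ 2 / 8) := by
        apply mul_le_mul_of_nonneg_left _ (Real.exp_pos _).le
        exact Finset.prod_le_prod (fun u _ => mgf_nonneg) (fun u _ => hmgf u)
    _ = Real.exp (-l * ((s:ℝ) * ε) + s * (l ^ 2 / 8)) := by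
        rw [Finset.prod_const, Finset.card_range, ← Real.exp_nat_mul, ← Real.exp_add]
    _ = Real.exp (-2 * s * ε ^ 2) := by congr 1; rw [hl]; ring

section Bandit
variable {Ω : Type*} {K : ℕ}
  (I : ℕ → Ω → Fin K) (N : Fin K → ℕ → Ω → ℕ)

lemma N_mono (hN : ∀ j t ω, N j t ω = ((Finset.Icc 1 t).filter fun s => I s ω = j).card)
    (j : Fin K) (ω : Ω) {t t' : ℕ} (h : t ≤ t') : N j t ω ≤ N j t' ω := by
  rw [hN, hN]
  exact Finset.card_le_card (Finset.filter_subset_filter _ (Finset.Icc_subset_Icc_right h))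

lemma N_le (hN : ∀ j t ω, N j t ω = ((Finset.Icc 1 t).filter fun s => I s ω = j).card)
    (j : Fin K) (ω : Ω) (t : ℕ) : N j t ω ≤ t := by
  rw [hN]
  calc ((Finset.Icc 1 t).filter fun s => I s ω = j).card ≤ (Finset.Icc 1 t).card :=
        Finset.card_filter_le _ _
    _ = t := by rw [Nat.card_Icc]; omega

lemma N_succ (hN : ∀ j t ω, N j t ω = ((Finset.Icc 1 t).filter fun s => I s ω = j).card)
    (j : Fin K) (ω : Ω) {t : ℕ} (ht : 1 ≤ t) (h : I t ω = j) :
    N j t ω = N j (t - 1) ω + 1 := by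
  rw [hN, hN]
  have hsplit : Finset.Icc 1 t = insert t (Finset.Icc 1 (t - 1)) := by
    ext s
    simp only [Finset.mem_Icc, Finset.mem_insert]
    omega
  rw [hsplit, Finset.filter_insert, if_pos h, Finset.card_insert_of_notMem]
  simp only [Finset.mem_filter, Finset.mem_Icc]
  omega

lemma N_K (hN : ∀ j t ω, N j t ω = ((Finset.Icc 1 t).filter fun s => I s ω = j).card)
    (hK : 0 < K)
    (hInit : ∀ t ω, 1 ≤ t → (ht : t ≤ K) → I t ω = ⟨t - 1, by have := ht; omega⟩)
    (j : Fin K) (ω : Ω) : N j K ω = 1 := by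
  rw [hN]
  have : (Finset.Icc 1 K).filter (fun s => I s ω = j) = {(j : ℕ) + 1} := by
    ext s
    simp only [Finset.mem_filter, Finset.mem_Icc, Finset.mem_singleton]
    constructor
    · rintro ⟨⟨h1, h2⟩, h3⟩
      rw [hInit s ω h1 h2] at h3
      have := congrArg Fin.val h3
      simp at this
      omega
    · rintro rfl
      have hj := j.2
      refine ⟨⟨by omega, by omega⟩, ?_⟩
      rw [hInit _ ω (by omega) (by omega)]
      ext
      simp
  rw [this, Finset.card_singleton]

lemma counting (hN : ∀ j t ω, N j t ω = ((Finset.Icc 1 t).filter fun s => I s ω = j).card)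
    (hK : 0 < K)
    (hInit : ∀ t ω, 1 ≤ t → (ht : t ≤ K) → I t ω = ⟨t - 1, by have := ht; omega⟩)
    (j : Fin K) (ω : Ω) {n ℓ : ℕ} (hℓ : 1 ≤ ℓ) (hn : K ≤ n) :
    N j n ω ≤ ℓ + ((Finset.Icc (K + 1) n).filter
      fun t => I t ω = j ∧ ℓ ≤ N j (t - 1) ω).card := by
  classical
  have hsplit : Finset.Icc 1 n = Finset.Icc 1 K ∪ Finset.Icc (K + 1) n := by
    ext s
    simp only [Finset.mem_Icc, Finset.mem_union]
    omega
  have hdisj : Disjoint ((Finset.Icc 1 K).filter fun s => I s ω = j)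
      ((Finset.Icc (K + 1) n).filter fun s => I s ω = j) := by
    rw [Finset.disjoint_left]
    intro a ha hb
    simp only [Finset.mem_filter, Finset.mem_Icc] at ha hb
    omega
  have step1 : N j n ω = 1 + ((Finset.Icc (K + 1) n).filter fun s => I s ω = j).card := by
    rw [hN, hsplit, Finset.filter_union, Finset.card_union_of_disjoint hdisj]
    congr 1
    have := N_K I N hN hK hInit j ω
    rw [hN] at this
    exact this
  -- split the filter
  set S := (Finset.Icc (K + 1) n).filter fun s => I s ω = j with hS
  have step2 : S.card = (S.filter fun t => N j (t - 1) ω < ℓ).card +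
      (S.filter fun t => ℓ ≤ N j (t - 1) ω).card := by
    rw [← Finset.card_filter_add_card_filter_not (p := fun t => N j (t - 1) ω < ℓ)]
    congr 1
    apply Finset.card_bij (fun a _ => a) <;> simp +contextual [Finset.mem_filter]
  -- the small part has card ≤ ℓ - 1
  have step3 : (S.filter fun t => N j (t - 1) ω < ℓ).card ≤ ℓ - 1 := by
    have := Finset.card_le_card_of_injOn (f := fun t => N j (t - 1) ω)
      (s := S.filter fun t => N j (t - 1) ω < ℓ) (t := Finset.Icc 1 (ℓ - 1)) ?_ ?_
    · rwa [Nat.card_Icc, Nat.add_sub_cancel] at this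
    · intro t ht
      simp only [hS, Finset.mem_coe, Finset.mem_filter, Finset.mem_Icc] at ht
      obtain ⟨⟨⟨h1, h2⟩, h3⟩, h4⟩ := ht
      have hge : 1 ≤ N j (t - 1) ω := by
        have := N_mono I N hN j ω (show K ≤ t - 1 by omega)
        rw [N_K I N hN hK hInit j ω] at this
        omega
      simp only [Finset.mem_coe, Finset.mem_Icc]
      omega
    · -- injectivity
      have key : ∀ t ∈ S.filter (fun t => N j (t - 1) ω < ℓ),
          ∀ t' ∈ S.filter (fun t => N j (t - 1) ω < ℓ),
          t < t' → N j (t - 1) ω < N j (t' - 1) ω := by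
        intro t ht t' ht' hlt
        simp only [hS, Finset.mem_filter, Finset.mem_Icc] at ht ht'
        have h1 : N j t ω = N j (t - 1) ω + 1 :=
          N_succ I N hN j ω (by omega) ht.1.2
        have h2 : N j t ω ≤ N j (t' - 1) ω :=
          N_mono I N hN j ω (by omega)
        omega
      intro a ha b hb hab
      by_contra hne
      rcases Ne.lt_or_gt hne with h | h
      · exact absurd hab (Nat.ne_of_lt (key a ha b hb h))
      · exact absurd hab.symm (Nat.ne_of_lt (key b hb a ha h))
  have step4 : (S.filter fun t => ℓ ≤ N j (t - 1) ω).card =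
      ((Finset.Icc (K + 1) n).filter fun t => I t ω = j ∧ ℓ ≤ N j (t - 1) ω).card := by
    rw [hS, Finset.filter_filter]
  omega

end Bandit

end UCBHelpers

set_option maxHeartbeats 1000000 in
/-- **UCB1 per-arm bound (Auer et al. 2002).**
Consider a `K`-armed stochastic bandit: for each arm `j`, the rewards `X j s`
(`s = 0, 1, …`) are i.i.d. random variables with values in `[0,1]` and mean `μ j`,
and the reward variables of all arms and pulls are mutually independent.
Let `μ* = max_j μ j` and `Δ j = μ* - μ j`.  Run the UCB1 policy: in rounds
`t = 1, …, K` play each arm once; then at each subsequent round `t`, play an arm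
maximizing the index `x̄ j t + √(2 ln t / N j (t-1))`, where `N j t` is the number
of times arm `j` has been played in rounds `1, …, t` (so `N j (t-1)` counts plays
before round `t`) and `x̄ j t` is the empirical mean of the rewards obtained from
arm `j` so far.  Then for every arm `j` with `Δ j > 0` and every `n ≥ K`, the
expected number of plays of arm `j` after `n` rounds satisfies
`E[N j n] ≤ 8 ln n / (Δ j)² + (1 + π²/3)`. -/
theorem ucb1_per_arm_bound
    {Ω : Type*} [MeasurableSpace Ω] (P : Measure Ω) [IsProbabilityMeasure P]
    (K : ℕ) (hK : 0 < K)
    -- rewards: `X j s` is the reward obtained from the `(s+1)`-th pull of arm `j`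
    (X : Fin K → ℕ → Ω → ℝ) (μ : Fin K → ℝ)
    (hXmeas : ∀ j s, Measurable (X j s))
    (hXrange : ∀ j s ω, X j s ω ∈ Set.Icc (0 : ℝ) 1)
    (hXindep : iIndepFun
      (fun js : Fin K × ℕ => X js.1 js.2) P)
    (hXid : ∀ j s, P.map (X j s) = P.map (X j 0))
    (hμ : ∀ j, μ j = ∫ ω, X j 0 ω ∂P)
    -- policy: `I t ω` is the arm played at round `t` (rounds are 1-indexed)
    (I : ℕ → Ω → Fin K) (hImeas : ∀ t, Measurable (I t))
    -- `N j t ω` : number of times arm `j` is played in rounds `1, …, t`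
    (N : Fin K → ℕ → Ω → ℕ)
    (hN : ∀ j t ω, N j t ω = ((Finset.Icc 1 t).filter fun s => I s ω = j).card)
    -- `xbar j t ω` : empirical mean of arm `j` before round `t`
    (xbar : Fin K → ℕ → Ω → ℝ)
    (hxbar : ∀ j t ω,
      xbar j t ω = (∑ s ∈ Finset.range (N j (t - 1) ω), X j s ω) / (N j (t - 1) ω))
    -- UCB1 initialization: play each arm once in rounds `1, …, K`
    (hInit : ∀ t ω, 1 ≤ t → (ht : t ≤ K) → I t ω = ⟨t - 1, by omega⟩)
    -- UCB1 selection: afterwards play an arm maximizing the UCB index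
    (hUCB : ∀ t ω, K < t → ∀ j : Fin K,
      xbar j t ω + Real.sqrt (2 * Real.log t / (N j (t - 1) ω)) ≤
        xbar (I t ω) t ω + Real.sqrt (2 * Real.log t / (N (I t ω) (t - 1) ω)))
    (μstar : ℝ) (hμstar : μstar = ⨆ j, μ j)
    (Δ : Fin K → ℝ) (hΔ : ∀ j, Δ j = μstar - μ j) :
    ∀ j : Fin K, 0 < Δ j → ∀ n : ℕ, K ≤ n →
      ∫ ω, (N j n ω : ℝ) ∂P ≤ 8 * Real.log n / (Δ j) ^ 2 + (1 + Real.pi ^ 2 / 3) := by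
  intro j hΔj n hn
  have hn1 : 1 ≤ n := le_trans hK hn
  have hlogn : 0 ≤ Real.log n := Real.log_nonneg (by exact_mod_cast hn1)
  set ℓ : ℕ := max 1 ⌈8 * Real.log n / (Δ j) ^ 2⌉₊ with hℓdef
  have hℓ1 : 1 ≤ ℓ := le_max_left _ _
  have hx0 : 0 ≤ 8 * Real.log n / (Δ j) ^ 2 := by positivity
  have hℓge : 8 * Real.log n / (Δ j) ^ 2 ≤ (ℓ : ℝ) :=
    (Nat.le_ceil _).trans (by exact_mod_cast le_max_right 1 _)
  have hℓle : (ℓ : ℝ) ≤ 8 * Real.log n / (Δ j) ^ 2 + 1 := by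
    have h1 := Nat.ceil_lt_add_one hx0
    rw [hℓdef]
    push_cast [Nat.cast_max]
    apply max_le <;> linarith
  -- optimal arm
  have : Nonempty (Fin K) := ⟨⟨0, hK⟩⟩
  obtain ⟨jstar, hjstar⟩ := Finite.exists_max μ
  have hμmax : μstar = μ jstar := by
    rw [hμstar]
    exact le_antisymm (ciSup_le hjstar)
      (le_ciSup (Set.Finite.bddAbove (Set.finite_range μ)) jstar)
  -- integrals of rewards
  have hXint_eq : ∀ (i : Fin K) (s : ℕ), ∫ ω, X i s ω ∂P = μ i := by
    intro i s
    rw [hμ i]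
    calc ∫ ω, X i s ω ∂P = ∫ x, x ∂(P.map (X i s)) :=
          (integral_map (hXmeas i s).aemeasurable aestronglyMeasurable_id).symm
      _ = ∫ x, x ∂(P.map (X i 0)) := by rw [hXid]
      _ = ∫ ω, X i 0 ω ∂P := integral_map (hXmeas i 0).aemeasurable aestronglyMeasurable_id
  have hXintble : ∀ (i : Fin K) (s : ℕ), Integrable (X i s) P := by
    intro i s
    refine (integrable_const (1:ℝ)).mono' (hXmeas i s).aestronglyMeasurable
      (ae_of_all _ fun ω => ?_)
    rw [Real.norm_eq_abs, abs_of_nonneg (hXrange i s ω).1]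
    exact (hXrange i s ω).2
  -- per-arm independence
  have hindep_arm : ∀ i : Fin K,
      iIndepFun (fun u => X i u) P := by
    intro i
    exact iIndepFun_precomp hXindep (fun u => (i, u))
      (fun a b h => (Prod.ext_iff.1 h).2)
  -- tail bounds
  have tail_j : ∀ (s : ℕ) (ε : ℝ), 0 ≤ ε →
      (P {ω | (s:ℝ) * (μ j + ε) ≤ ∑ u ∈ Finset.range s, X j u ω}).toReal ≤
        Real.exp (-2 * s * ε ^ 2) :=
    fun s ε hε => hoeffding_tail P (fun u => X j u) (fun u => hXmeas j u)
      (fun u ω => hXrange j u ω) (hindep_arm j) (μ j) (fun u => hXint_eq j u) s ε hε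
  have tail_star : ∀ (s : ℕ) (ε : ℝ), 0 ≤ ε →
      (P {ω | (s:ℝ) * (1 - μ jstar + ε) ≤
          ∑ u ∈ Finset.range s, (1 - X jstar u ω)}).toReal ≤
        Real.exp (-2 * s * ε ^ 2) := by
    intro s ε hε
    refine hoeffding_tail P (fun u ω => 1 - X jstar u ω)
      (fun u => measurable_const.sub (hXmeas jstar u))
      (fun u ω => Set.mem_Icc.2
        ⟨show (0:ℝ) ≤ 1 - X jstar u ω by linarith [(hXrange jstar u ω).2],
         show (1:ℝ) - X jstar u ω ≤ 1 by linarith [(hXrange jstar u ω).1]⟩)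
      ((hindep_arm jstar).comp (fun _ x => 1 - x)
        (fun _ => measurable_const.sub measurable_id))
      (1 - μ jstar) (fun u => ?_) s ε hε
    rw [integral_sub (integrable_const 1) (hXintble jstar u), hXint_eq]
    simp
  -- confidence radius
  set c : ℕ → ℕ → ℝ := fun t s => Real.sqrt (2 * Real.log t / s) with hc
  have hc0 : ∀ t s, 0 ≤ c t s := fun t s => Real.sqrt_nonneg _
  -- events
  set A : ℕ → Set Ω := fun t => {ω | I t ω = j ∧ ℓ ≤ N j (t - 1) ω} with hA
  set Bj : ℕ → ℕ → Set Ω :=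
    fun t s => {ω | (s:ℝ) * (μ j + c t s) ≤ ∑ u ∈ Finset.range s, X j u ω} with hBj
  set Bs : ℕ → ℕ → Set Ω :=
    fun t s => {ω | (s:ℝ) * (1 - μ jstar + c t s) ≤
      ∑ u ∈ Finset.range s, (1 - X jstar u ω)} with hBs
  -- measurability
  have hNmeas : ∀ (i : Fin K) (t : ℕ), Measurable fun ω => N i t ω := by
    intro i t
    have heq : (fun ω => N i t ω)
        = fun ω => ∑ s ∈ Finset.Icc 1 t, if I s ω = i then 1 else 0 := by
      funext ω
      rw [hN, Finset.card_filter]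
    rw [heq]
    exact Finset.measurable_sum _ fun s _ =>
      Measurable.ite ((hImeas s) (measurableSet_singleton i)) measurable_const measurable_const
  have hAmeas : ∀ t, MeasurableSet (A t) := by
    intro t
    have : A t = (I t ⁻¹' {j}) ∩ ((fun ω => N j (t - 1) ω) ⁻¹' (Set.Ici ℓ)) := by
      ext ω
      simp [hA, Set.mem_preimage, Set.mem_Ici]
    rw [this]
    exact ((hImeas t) (measurableSet_singleton j)).inter
      ((hNmeas j (t - 1)) MeasurableSet.of_discrete)
  -- pointwise bound
  have hpoint : ∀ ω, (N j n ω : ℝ) ≤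
      (ℓ:ℝ) + ∑ t ∈ Finset.Icc (K + 1) n, Set.indicator (A t) (fun _ => (1:ℝ)) ω := by
    intro ω
    have h1 := counting I N hN hK hInit j ω hℓ1 hn
    have h2 : ((((Finset.Icc (K + 1) n).filter
        fun t => I t ω = j ∧ ℓ ≤ N j (t - 1) ω).card : ℕ) : ℝ)
        = ∑ t ∈ Finset.Icc (K + 1) n, Set.indicator (A t) (fun _ => (1:ℝ)) ω := by
      rw [Finset.card_filter]
      push_cast
      refine Finset.sum_congr rfl fun t _ => ?_
      by_cases h : I t ω = j ∧ ℓ ≤ N j (t - 1) ω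
      · rw [if_pos h, Set.indicator_of_mem (by exact h)]
      · rw [if_neg h, Set.indicator_of_notMem (by exact h)]
    calc (N j n ω : ℝ) ≤ ((ℓ + ((Finset.Icc (K + 1) n).filter
          fun t => I t ω = j ∧ ℓ ≤ N j (t - 1) ω).card : ℕ) : ℝ) := by exact_mod_cast h1
      _ = (ℓ:ℝ) + ∑ t ∈ Finset.Icc (K + 1) n, Set.indicator (A t) (fun _ => (1:ℝ)) ω := by
          push_cast [← h2]; ring
  -- integrate
  have hIndInt : ∀ t, Integrable (Set.indicator (A t) (fun _ => (1:ℝ))) P :=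
    fun t => (integrable_const 1).indicator (hAmeas t)
  have hNint : Integrable (fun ω => (N j n ω : ℝ)) P := by
    refine (integrable_const (n:ℝ)).mono'
      ((Measurable.of_discrete (f := (Nat.cast : ℕ → ℝ))).comp (hNmeas j n)).aestronglyMeasurable
      (ae_of_all _ fun ω => ?_)
    rw [Real.norm_eq_abs, abs_of_nonneg (by positivity)]
    exact_mod_cast N_le I N hN j ω n
  have hint_le : ∫ ω, (N j n ω : ℝ) ∂P ≤
      (ℓ:ℝ) + ∑ t ∈ Finset.Icc (K + 1) n, (P (A t)).toReal := by
    calc ∫ ω, (N j n ω : ℝ) ∂P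
        ≤ ∫ ω, ((ℓ:ℝ) + ∑ t ∈ Finset.Icc (K + 1) n,
            Set.indicator (A t) (fun _ => (1:ℝ)) ω) ∂P := by
          refine integral_mono hNint ?_ hpoint
          exact (integrable_const _).add (integrable_finset_sum _ fun t _ => hIndInt t)
      _ = (ℓ:ℝ) + ∑ t ∈ Finset.Icc (K + 1) n, (P (A t)).toReal := by
          rw [integral_add (integrable_const _) (integrable_finset_sum _ fun t _ => hIndInt t),
            integral_const, integral_finset_sum _ fun t _ => hIndInt t]
          simp only [measure_univ, probReal_univ, ENNReal.toReal_one, smul_eq_mul, one_mul]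
          congr 1
          exact Finset.sum_congr rfl fun t _ => integral_indicator_one (hAmeas t)
  -- bound P(A t)
  have hPA : ∀ t ∈ Finset.Icc (K + 1) n, (P (A t)).toReal ≤ 2 / (t:ℝ)^2 := by
    intro t ht
    rw [Finset.mem_Icc] at ht
    have h2t : 2 ≤ t := by omega
    have htpos : (0:ℝ) < t := by positivity
    have hlogt0 : 0 ≤ Real.log t := Real.log_nonneg (by exact_mod_cast (by omega : 1 ≤ t))
    -- event inclusion
    have hsub : A t ⊆ (⋃ s ∈ Finset.Icc 1 (t - 1), Bs t s) ∪
        ⋃ s ∈ Finset.Icc ℓ (t - 1), Bj t s := by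
      intro ω hω
      obtain ⟨hI, hsℓ⟩ := hω
      by_contra hnot
      simp only [Set.mem_union, Set.mem_iUnion, not_or, not_exists] at hnot
      obtain ⟨hnot1, hnot2⟩ := hnot
      set s : ℕ := N j (t - 1) ω with hsdef
      set sstar : ℕ := N jstar (t - 1) ω with hssdef
      have hs1 : 1 ≤ s := le_trans hℓ1 hsℓ
      have hsle : s ≤ t - 1 := N_le I N hN j ω (t - 1)
      have hss1 : 1 ≤ sstar := by
        have h1 := N_mono I N hN jstar ω (show K ≤ t - 1 by omega)
        rw [N_K I N hN hK hInit jstar ω] at h1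
        exact h1
      have hssle : sstar ≤ t - 1 := N_le I N hN jstar ω (t - 1)
      have hspos : (0:ℝ) < s := by exact_mod_cast hs1
      have hsspos : (0:ℝ) < sstar := by exact_mod_cast hss1
      have hB1 := hnot1 sstar (Finset.mem_Icc.2 ⟨hss1, hssle⟩)
      have hB2 := hnot2 s (Finset.mem_Icc.2 ⟨hsℓ, hsle⟩)
      rw [hBs] at hB1
      rw [hBj] at hB2
      simp only [Set.mem_setOf_eq, not_le] at hB1 hB2
      -- UCB inequality
      have hucb := hUCB t ω (by omega) jstar
      rw [hI, hxbar, hxbar, ← hsdef, ← hssdef] at hucb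
      -- from ¬Bs : empirical mean of jstar is above μ jstar - c
      have hSs : ∑ u ∈ Finset.range sstar, (1 - X jstar u ω)
          = (sstar:ℝ) - ∑ u ∈ Finset.range sstar, X jstar u ω := by
        rw [Finset.sum_sub_distrib, Finset.sum_const, Finset.card_range, nsmul_eq_mul, mul_one]
      rw [hSs] at hB1
      have hgt : μ jstar - c t sstar < (∑ u ∈ Finset.range sstar, X jstar u ω) / sstar := by
        rw [lt_div_iff₀ hsspos]
        nlinarith [hB1]
      have hlt : (∑ u ∈ Finset.range s, X j u ω) / s < μ j + c t s := by
        rw [div_lt_iff₀ hspos]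
        nlinarith [hB2]
      -- 2 c ≤ Δ j
      have hcle : 2 * c t s ≤ Δ j := by
        have harg : 2 * Real.log t / (s:ℝ) ≤ (Δ j)^2 / 4 := by
          have hstep1 : 2 * Real.log t / (s:ℝ) ≤ 2 * Real.log n / (ℓ:ℝ) := by
            apply div_le_div₀ (by positivity)
              (by linarith [Real.log_le_log htpos (show (t:ℝ) ≤ (n:ℝ) by exact_mod_cast ht.2)])
              (by exact_mod_cast hℓ1) (by exact_mod_cast hsℓ)
          have hstep2 : 2 * Real.log n / (ℓ:ℝ) ≤ (Δ j)^2 / 4 := by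
            rw [div_le_div_iff₀ (by exact_mod_cast hℓ1 : (0:ℝ) < (ℓ:ℝ)) (by norm_num : (0:ℝ) < 4)]
            have hmul := mul_le_mul_of_nonneg_left hℓge
              (le_of_lt (by positivity : (0:ℝ) < (Δ j)^2))
            have h8 : (Δ j)^2 * (8 * Real.log n / (Δ j)^2) = 8 * Real.log n := by
              field_simp
            rw [h8] at hmul
            nlinarith
          linarith
        have : c t s ≤ Δ j / 2 := by
          rw [hc]
          calc Real.sqrt (2 * Real.log t / (s:ℝ)) ≤ Real.sqrt ((Δ j)^2 / 4) :=
                Real.sqrt_le_sqrt harg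
            _ = Δ j / 2 := by
                rw [show (Δ j)^2/4 = (Δ j / 2)^2 by ring, Real.sqrt_sq (by linarith)]
        linarith
      have hΔeq : Δ j = μ jstar - μ j := by rw [hΔ, hμmax]
      -- contradiction
      have hcss := hc0 t sstar
      have hcs := hc0 t s
      simp only [hc] at hucb hgt hlt hcle
      linarith
    -- measure bound
    have hBsbound : ∀ s ∈ Finset.Icc 1 (t - 1), (P (Bs t s)).toReal ≤ ((t:ℝ)^4)⁻¹ := by
      intro s hs
      rw [Finset.mem_Icc] at hs
      have hspos : (0:ℝ) < s := by exact_mod_cast hs.1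
      refine le_trans (tail_star s (c t s) (hc0 t s)) ?_
      have hcsq : (c t s)^2 = 2 * Real.log t / s := Real.sq_sqrt (by positivity)
      have hexp : -2 * (s:ℝ) * (c t s)^2 = -(Real.log ((t:ℝ)^4)) := by
        rw [hcsq, Real.log_pow]
        field_simp
        ring
      rw [hexp, Real.exp_neg, Real.exp_log (by positivity)]
    have hBjbound : ∀ s ∈ Finset.Icc ℓ (t - 1), (P (Bj t s)).toReal ≤ ((t:ℝ)^4)⁻¹ := by
      intro s hs
      rw [Finset.mem_Icc] at hs
      have hspos : (0:ℝ) < s := by exact_mod_cast lt_of_lt_of_le hℓ1 hs.1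
      refine le_trans (tail_j s (c t s) (hc0 t s)) ?_
      have hcsq : (c t s)^2 = 2 * Real.log t / s := Real.sq_sqrt (by positivity)
      have hexp : -2 * (s:ℝ) * (c t s)^2 = -(Real.log ((t:ℝ)^4)) := by
        rw [hcsq, Real.log_pow]
        field_simp
        ring
      rw [hexp, Real.exp_neg, Real.exp_log (by positivity)]
    -- union bound
    have hmeasbound : P (A t) ≤ (∑ s ∈ Finset.Icc 1 (t - 1), P (Bs t s)) +
        ∑ s ∈ Finset.Icc ℓ (t - 1), P (Bj t s) := by
      calc P (A t) ≤ P ((⋃ s ∈ Finset.Icc 1 (t - 1), Bs t s) ∪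
            ⋃ s ∈ Finset.Icc ℓ (t - 1), Bj t s) := measure_mono hsub
        _ ≤ P (⋃ s ∈ Finset.Icc 1 (t - 1), Bs t s) +
            P (⋃ s ∈ Finset.Icc ℓ (t - 1), Bj t s) := measure_union_le _ _
        _ ≤ _ := add_le_add (measure_biUnion_finset_le _ _) (measure_biUnion_finset_le _ _)
    have hfin1 : ∑ s ∈ Finset.Icc 1 (t - 1), P (Bs t s) ≠ ⊤ :=
      (ENNReal.sum_lt_top.2 fun s _ => measure_lt_top P _).ne
    have hfin2 : ∑ s ∈ Finset.Icc ℓ (t - 1), P (Bj t s) ≠ ⊤ :=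
      (ENNReal.sum_lt_top.2 fun s _ => measure_lt_top P _).ne
    calc (P (A t)).toReal
        ≤ ((∑ s ∈ Finset.Icc 1 (t - 1), P (Bs t s)) +
            ∑ s ∈ Finset.Icc ℓ (t - 1), P (Bj t s)).toReal :=
          ENNReal.toReal_mono (by finiteness) hmeasbound
      _ = (∑ s ∈ Finset.Icc 1 (t - 1), (P (Bs t s)).toReal) +
            ∑ s ∈ Finset.Icc ℓ (t - 1), (P (Bj t s)).toReal := by
          rw [ENNReal.toReal_add hfin1 hfin2,
            ENNReal.toReal_sum (fun s _ => measure_ne_top P _),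
            ENNReal.toReal_sum (fun s _ => measure_ne_top P _)]
      _ ≤ (Finset.Icc 1 (t - 1)).card * ((t:ℝ)^4)⁻¹ +
            (Finset.Icc ℓ (t - 1)).card * ((t:ℝ)^4)⁻¹ := by
          gcongr ?_ + ?_
          · calc ∑ s ∈ Finset.Icc 1 (t - 1), (P (Bs t s)).toReal
                ≤ ∑ s ∈ Finset.Icc 1 (t - 1), ((t:ℝ)^4)⁻¹ := Finset.sum_le_sum hBsbound
              _ = (Finset.Icc 1 (t - 1)).card * ((t:ℝ)^4)⁻¹ := by
                  rw [Finset.sum_const, nsmul_eq_mul]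
          · calc ∑ s ∈ Finset.Icc ℓ (t - 1), (P (Bj t s)).toReal
                ≤ ∑ s ∈ Finset.Icc ℓ (t - 1), ((t:ℝ)^4)⁻¹ := Finset.sum_le_sum hBjbound
              _ = (Finset.Icc ℓ (t - 1)).card * ((t:ℝ)^4)⁻¹ := by
                  rw [Finset.sum_const, nsmul_eq_mul]
      _ ≤ (t:ℝ) * ((t:ℝ)^4)⁻¹ + (t:ℝ) * ((t:ℝ)^4)⁻¹ := by
          have hcard1 : (((Finset.Icc 1 (t - 1)).card : ℕ) : ℝ) ≤ (t:ℝ) := by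
            rw [Nat.card_Icc]
            exact_mod_cast (by omega : t - 1 + 1 - 1 ≤ t)
          have hcard2 : (((Finset.Icc ℓ (t - 1)).card : ℕ) : ℝ) ≤ (t:ℝ) := by
            rw [Nat.card_Icc]
            exact_mod_cast (by omega : t - 1 + 1 - ℓ ≤ t)
          have hpos : (0:ℝ) ≤ ((t:ℝ)^4)⁻¹ := by positivity
          exact add_le_add (mul_le_mul_of_nonneg_right hcard1 hpos)
            (mul_le_mul_of_nonneg_right hcard2 hpos)
      _ ≤ 2 / (t:ℝ)^2 := by
          rw [div_eq_mul_inv]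
          have h1 : (t:ℝ) * ((t:ℝ)^4)⁻¹ ≤ ((t:ℝ)^2)⁻¹ := by
            rw [mul_inv_le_iff₀ (by positivity), inv_mul_eq_div, le_div_iff₀ (by positivity)]
            have h2r : (1:ℝ) ≤ t := by exact_mod_cast (by omega : 1 ≤ t)
            calc (t:ℝ) * (t:ℝ)^2 = (t:ℝ)^3 := by ring
              _ ≤ (t:ℝ)^4 := pow_le_pow_right₀ h2r (by norm_num)
          linarith
  -- sum the tail
  have hsum : ∑ t ∈ Finset.Icc (K + 1) n, (2 / (t:ℝ)^2) ≤ Real.pi ^ 2 / 3 := by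
    have hb := sum_le_hasSum (Finset.Icc (K + 1) n)
      (fun i _ => by positivity) hasSum_zeta_two
    calc ∑ t ∈ Finset.Icc (K + 1) n, (2 / (t:ℝ)^2)
        = 2 * ∑ t ∈ Finset.Icc (K + 1) n, 1 / (t:ℝ)^2 := by
          rw [Finset.mul_sum]
          exact Finset.sum_congr rfl fun t _ => by ring
      _ ≤ 2 * (Real.pi ^ 2 / 6) := by linarith
      _ = Real.pi ^ 2 / 3 := by ring
  -- assemble
  have hfinal : ∑ t ∈ Finset.Icc (K + 1) n, (P (A t)).toReal ≤ Real.pi ^ 2 / 3 :=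
    le_trans (Finset.sum_le_sum hPA) hsum
  linarith [hint_le, hℓle, hfinal]
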